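/- Fix d > 1, and let f, g : ℝ → [0,1] be measurable non-increasing solutions of the un-truncated cavity equation. Then there exists t ≥ 0 such that for all x ∈ ℝ, f(x + t) ≤ g(x) ≤ f(x - t). -/

import Mathlib

/-!
With `E f x = d ∫_{-x}^∞ (x + y)^(d-1) f(y) dy` (`cavityExponent`), a solution satisfies
`f = exp (-E f)`. Substituting `y ↦ y + t` shows that `E` of `f (· + t)` at `x` is
`E f (x - t)`; since `E` is monotone in `f`, `f (· + t) ≤ g` on `(-x, ∞)` gives `g x ≤ f (x - t)`.

For `x ≥ 0`, `E f x = x^d + O((x + 1)^(d-1))`: the error from below is controlled by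
`∫_{-∞}^0 (1 - f)`, finite because `1 - f ≤ E f` and `f v ≤ exp (-f 0 * v^d)` for `v ≥ 0`.
As `(x + t)^d - x^d ≥ (d t / 2) (x + t/2)^(d-1)`, for large `t` this gives `f (x + t) ≤ g x` and
`g (x + t) ≤ f x` on `[0, ∞)`. Translation turns the second into `f (x + t) ≤ g x` on `(-∞, -t]`,
monotonicity bridges `[-t, 0]` once `t` is doubled, and translation once more gives the other
half of the sandwich.
-/

open MeasureTheory Set Filter

/-- The truncated cavity operator `T`. -/
noncomputable def T (d lam : ℝ) (f : ℝ → ℝ) : ℝ → ℝ :=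
  fun x => Real.exp (-(d * ∫ y in (-x)..lam, (x + y) ^ (d - 1) * f y))

/-- `f` is the fixed point of the truncated cavity operator on `[-λ, λ]`
(non-increasing and `[0,1]`-valued there), extended to `ℝ` by `1` on `(-∞, -λ]`
and `0` on `(λ, ∞)`. -/
def ExtFixedPoint (d lam : ℝ) (f : ℝ → ℝ) : Prop :=
  AntitoneOn f (Icc (-lam) lam) ∧
  (∀ x ∈ Icc (-lam) lam, f x ∈ Icc (0 : ℝ) 1) ∧
  (∀ x ≤ -lam, f x = 1) ∧ (∀ x > lam, f x = 0) ∧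
  (∀ x ∈ Icc (-lam) lam, T d lam f x = f x)

/-- `f : ℝ → [0,1]` is a measurable solution of the un-truncated Mézard–Parisi
cavity equation `f(x) = exp(-d ∫_{-x}^∞ (x+y)^{d-1} f(y) dy)`, the integrals
being (finite and) well-defined. -/
def SolvesCavity (d : ℝ) (f : ℝ → ℝ) : Prop :=
  Measurable f ∧ (∀ x : ℝ, f x ∈ Icc (0 : ℝ) 1) ∧
  (∀ x : ℝ, IntegrableOn (fun y => (x + y) ^ (d - 1) * f y) (Ioi (-x))) ∧
  (∀ x : ℝ, f x = Real.exp (-(d * ∫ y in Ioi (-x), (x + y) ^ (d - 1) * f y)))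

open Real

section Translation

variable {E : Type*} [NormedAddCommGroup E]

theorem integrableOn_Ioi_comp_add_right_iff (h : ℝ → E) (a c : ℝ) :
    IntegrableOn (fun y => h (y + c)) (Ioi a) ↔ IntegrableOn h (Ioi (a + c)) := by
  have hpre : (fun y : ℝ => y + c) ⁻¹' Ioi (a + c) = Ioi a := by ext y; simp
  rw [← hpre]
  exact (measurePreserving_add_right volume c).integrableOn_comp_preimage
    (measurableEmbedding_addRight c)

theorem setIntegral_Ioi_comp_add_right [NormedSpace ℝ E] (h : ℝ → E) (a c : ℝ) :
    ∫ y in Ioi a, h (y + c) = ∫ y in Ioi (a + c), h y := by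
  have hpre : (fun y : ℝ => y + c) ⁻¹' Ioi (a + c) = Ioi a := by ext y; simp
  rw [← (measurePreserving_add_right volume c).setIntegral_preimage_emb
    (measurableEmbedding_addRight c) h (Ioi (a + c)), hpre]

end Translation

theorem rpow_add_mul_rpow_sub_one_le_add_rpow {d b h : ℝ} (hd : 1 ≤ d) (hb : 0 < b)
    (hh : 0 ≤ h) : b ^ d + d * h * b ^ (d - 1) ≤ (b + h) ^ d := by
  have hbernoulli : 1 + d * (h / b) ≤ (1 + h / b) ^ d :=
    one_add_mul_self_le_rpow_one_add (by linarith [div_nonneg hh hb.le]) hd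
  calc b ^ d + d * h * b ^ (d - 1) = b ^ d * (1 + d * (h / b)) := by
        rw [rpow_sub_one hb.ne']; field_simp
    _ ≤ b ^ d * (1 + h / b) ^ d := by gcongr
    _ = (b + h) ^ d := by
        rw [← mul_rpow hb.le (by positivity)]; congr 1; field_simp

theorem rpow_add_lower_order_le_add_rpow {d a t C₁ C₂ : ℝ} (hd : 1 ≤ d) (ha : 0 ≤ a)
    (ht : 1 ≤ t) (hC₁ : 0 ≤ C₁) (hC₂ : 0 ≤ C₂)
    (hCt : 2 ^ d * (C₁ + C₂) ≤ d * t) :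
    a ^ d + C₁ * (a + 1) ^ (d - 1) + C₂ * (a + t) ^ (d - 1) ≤ (a + t) ^ d := by
  set b := a + t / 2 with hb_def
  have hb : 0 < b := by positivity
  have hd₁ : 0 ≤ d - 1 := by linarith
  have h_one_le_t : (a + 1) ^ (d - 1) ≤ (a + t) ^ (d - 1) := by gcongr
  have h_le_two_mul : (a + t) ^ (d - 1) ≤ 2 ^ (d - 1) * b ^ (d - 1) := by
    rw [← mul_rpow zero_le_two hb.le]
    gcongr
    linarith
  have h_tangent : b ^ d + d * (t / 2) * b ^ (d - 1) ≤ (a + t) ^ d := by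
    simpa only [b, add_assoc, add_halves] using
      rpow_add_mul_rpow_sub_one_le_add_rpow hd hb (h := t / 2) (by positivity)
  have h_mono : a ^ d ≤ b ^ d := by gcongr; linarith
  have hC : 2 ^ (d - 1) * (C₁ + C₂) ≤ d * (t / 2) := by
    rw [rpow_sub_one two_ne_zero]; linarith
  have hbpow : 0 ≤ b ^ (d - 1) := by positivity
  nlinarith [mul_le_mul_of_nonneg_right hC hbpow]

theorem integrableOn_Ioc_add_rpow {p : ℝ} (hp : 0 ≤ p) (x a b : ℝ) :
    IntegrableOn (fun y => (x + y) ^ p) (Ioc a b) :=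
  ((continuous_const.add continuous_id).rpow_const fun _ => Or.inr hp).integrableOn_Ioc

noncomputable def cavityExponent (d : ℝ) (h : ℝ → ℝ) (x : ℝ) : ℝ :=
  d * ∫ y in Ioi (-x), (x + y) ^ (d - 1) * h y

theorem mul_integral_Ioc_add_rpow {d x : ℝ} (hd : 0 < d) (hx : 0 ≤ x) :
    d * ∫ y in Ioc (-x) 0, (x + y) ^ (d - 1) = x ^ d := by
  rw [← intervalIntegral.integral_of_le (by linarith),
    intervalIntegral.integral_comp_add_left (fun u => u ^ (d - 1)), add_neg_cancel, add_zero,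
    integral_rpow (Or.inl (by linarith)), sub_add_cancel, zero_rpow hd.ne', sub_zero]
  field_simp

theorem cavityExponent_comp_add_right (d : ℝ) (h : ℝ → ℝ) (x t : ℝ) :
    cavityExponent d (fun y => h (y + t)) x = cavityExponent d h (x - t) := by
  have := setIntegral_Ioi_comp_add_right (fun z => (x - t + z) ^ (d - 1) * h z) (-x) t
  simp only [sub_add_add_cancel, neg_add_eq_sub] at this
  rw [cavityExponent, cavityExponent, this, neg_sub]

theorem cavityExponent_sub_le {d x t : ℝ} {h₁ h₂ : ℝ → ℝ} (hd : 0 ≤ d)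
    (h₁_int : IntegrableOn (fun y => (x - t + y) ^ (d - 1) * h₁ y) (Ioi (-(x - t))))
    (h₂_int : IntegrableOn (fun y => (x + y) ^ (d - 1) * h₂ y) (Ioi (-x)))
    (hle : ∀ y, -x < y → h₁ (y + t) ≤ h₂ y) :
    cavityExponent d h₁ (x - t) ≤ cavityExponent d h₂ x := by
  have h₁_int' : IntegrableOn (fun y => (x + y) ^ (d - 1) * h₁ (y + t)) (Ioi (-x)) := by
    rw [show -(x - t) = -x + t by ring] at h₁_int
    have := (integrableOn_Ioi_comp_add_right_iff _ (-x) t).2 h₁_int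
    simpa only [sub_add_add_cancel] using this
  rw [← cavityExponent_comp_add_right]
  refine mul_le_mul_of_nonneg_left (setIntegral_mono_on h₁_int' h₂_int measurableSet_Ioi
    fun y hy => ?_) hd
  have hxy : 0 ≤ x + y := by linarith [mem_Ioi.1 hy]
  exact mul_le_mul_of_nonneg_left (hle y hy) (rpow_nonneg hxy _)

namespace SolvesCavity

variable {d : ℝ} {f g : ℝ → ℝ}

theorem measurable (hf : SolvesCavity d f) : Measurable f := hf.1

theorem mem_Icc (hf : SolvesCavity d f) (x : ℝ) : f x ∈ Icc 0 1 := hf.2.1 x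

theorem integrableOn (hf : SolvesCavity d f) (x : ℝ) :
    IntegrableOn (fun y => (x + y) ^ (d - 1) * f y) (Ioi (-x)) :=
  hf.2.2.1 x

theorem eq_exp (hf : SolvesCavity d f) (x : ℝ) : f x = exp (-cavityExponent d f x) :=
  hf.2.2.2 x

theorem pos (hf : SolvesCavity d f) (x : ℝ) : 0 < f x := by
  rw [hf.eq_exp]
  exact exp_pos _

theorem one_sub_le_cavityExponent (hf : SolvesCavity d f) (x : ℝ) :
    1 - f x ≤ cavityExponent d f x := by
  linarith [hf.eq_exp x, add_one_le_exp (-cavityExponent d f x)]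

theorem le_comp_sub_of_comp_add_le (hd : 0 ≤ d) (hf : SolvesCavity d f) (hg : SolvesCavity d g)
    {x t : ℝ} (hle : ∀ y, -x < y → f (y + t) ≤ g y) : g x ≤ f (x - t) := by
  rw [hg.eq_exp, hf.eq_exp]
  exact exp_le_exp.2 (neg_le_neg
    (cavityExponent_sub_le hd (hf.integrableOn _) (hg.integrableOn x) hle))

theorem setIntegral_Ioc_le_cavityExponent (hd : 0 ≤ d) (hf : SolvesCavity d f) (x : ℝ) :
    d * ∫ y in Ioc (-x) 0, (x + y) ^ (d - 1) * f y ≤ cavityExponent d f x := by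
  refine mul_le_mul_of_nonneg_left (setIntegral_mono_set (hf.integrableOn x) ?_
    Ioc_subset_Ioi_self.eventuallyLE) hd
  filter_upwards [ae_restrict_mem measurableSet_Ioi] with y hy
  exact mul_nonneg (rpow_nonneg (by linarith [mem_Ioi.1 hy]) _) (hf.mem_Icc y).1

theorem le_exp_neg_mul_rpow (hd : 1 ≤ d) (hf : SolvesCavity d f) (hf_anti : Antitone f)
    {v : ℝ} (hv : 0 ≤ v) : f v ≤ exp (-(f 0 * v ^ d)) := by
  rw [hf.eq_exp v]
  refine exp_le_exp.2 (neg_le_neg ?_)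
  calc f 0 * v ^ d = d * ∫ y in Ioc (-v) 0, (v + y) ^ (d - 1) * f 0 := by
        rw [integral_mul_const, ← mul_assoc, mul_integral_Ioc_add_rpow (by linarith) hv, mul_comm]
    _ ≤ d * ∫ y in Ioc (-v) 0, (v + y) ^ (d - 1) * f y := by
        refine mul_le_mul_of_nonneg_left (setIntegral_mono_on ?_
          ((hf.integrableOn v).mono_set Ioc_subset_Ioi_self) measurableSet_Ioc fun y hy => ?_)
          (by linarith)
        · exact (integrableOn_Ioc_add_rpow (by linarith) v (-v) 0).mul_const _
        · exact mul_le_mul_of_nonneg_left (hf_anti hy.2) (rpow_nonneg (by linarith [hy.1]) _)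
    _ ≤ cavityExponent d f v := hf.setIntegral_Ioc_le_cavityExponent (by linarith) v

theorem cavityExponent_neg_le (hd : 1 ≤ d) (hf : SolvesCavity d f) (hf_anti : Antitone f)
    {σ : ℝ} (hσ : 0 ≤ σ) :
    cavityExponent d f (-σ) ≤
      (d * ∫ y in Ioi 0, y ^ (d - 1) * exp (-(f 0 / 2) * y ^ d)) *
        exp (-(f 0 / 2) * σ ^ d) := by
  set c := f 0 / 2 with hc_def
  have hc : 0 < c := half_pos (hf.pos 0)
  have h_maj : IntegrableOn (fun y => y ^ (d - 1) * exp (-c * y ^ d)) (Ioi 0) :=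
    integrableOn_rpow_mul_exp_neg_mul_rpow (by linarith) (by linarith) hc
  have h_pointwise : ∀ y ∈ Ioi σ,
      (-σ + y) ^ (d - 1) * f y ≤ exp (-c * σ ^ d) * (y ^ (d - 1) * exp (-c * y ^ d)) := by
    intro y (hy : σ < y)
    have hfy : f y ≤ exp (-c * σ ^ d) * exp (-c * y ^ d) := by
      rw [← exp_add]
      refine (hf.le_exp_neg_mul_rpow hd hf_anti (by linarith)).trans (exp_le_exp.2 ?_)
      have : σ ^ d ≤ y ^ d := rpow_le_rpow hσ hy.le (by linarith)
      rw [show f 0 = 2 * c by rw [hc_def]; ring]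
      nlinarith
    calc (-σ + y) ^ (d - 1) * f y ≤ y ^ (d - 1) * (exp (-c * σ ^ d) * exp (-c * y ^ d)) :=
          mul_le_mul (rpow_le_rpow (by linarith) (by linarith) (by linarith)) hfy
            (hf.mem_Icc y).1 (rpow_nonneg (by linarith) _)
      _ = exp (-c * σ ^ d) * (y ^ (d - 1) * exp (-c * y ^ d)) := by ring
  have h_int : IntegrableOn (fun y => (-σ + y) ^ (d - 1) * f y) (Ioi σ) := by
    simpa only [neg_neg] using hf.integrableOn (-σ)
  calc cavityExponent d f (-σ) = d * ∫ y in Ioi σ, (-σ + y) ^ (d - 1) * f y := by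
        rw [cavityExponent, neg_neg]
    _ ≤ d * ∫ y in Ioi σ, exp (-c * σ ^ d) * (y ^ (d - 1) * exp (-c * y ^ d)) :=
        mul_le_mul_of_nonneg_left (setIntegral_mono_on h_int
          ((h_maj.mono_set (Ioi_subset_Ioi hσ)).const_mul _) measurableSet_Ioi h_pointwise)
          (by linarith)
    _ = exp (-c * σ ^ d) * (d * ∫ y in Ioi σ, y ^ (d - 1) * exp (-c * y ^ d)) := by
        rw [integral_const_mul]; ring
    _ ≤ exp (-c * σ ^ d) * (d * ∫ y in Ioi 0, y ^ (d - 1) * exp (-c * y ^ d)) := by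
        refine mul_le_mul_of_nonneg_left (mul_le_mul_of_nonneg_left (setIntegral_mono_set h_maj
          ?_ (Ioi_subset_Ioi hσ).eventuallyLE) (by linarith)) (exp_nonneg _)
        filter_upwards [ae_restrict_mem measurableSet_Ioi] with y (hy : 0 < y)
        positivity
    _ = _ := mul_comm _ _

theorem integrableOn_one_sub_Iic (hd : 1 ≤ d) (hf : SolvesCavity d f) (hf_anti : Antitone f) :
    IntegrableOn (fun y => 1 - f y) (Iic 0) := by
  set K := d * ∫ y in Ioi 0, y ^ (d - 1) * exp (-(f 0 / 2) * y ^ d)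
  have h_maj : IntegrableOn (fun σ => K * exp (-(f 0 / 2) * σ ^ d)) (Ici (-0)) := by
    rw [neg_zero, integrableOn_Ici_iff_integrableOn_Ioi]
    have := (integrableOn_rpow_mul_exp_neg_mul_rpow (s := 0) (by norm_num) (by linarith)
      (half_pos (hf.pos 0))).const_mul K
    simp only [rpow_zero, one_mul] at this
    exact this
  refine Integrable.mono' h_maj.comp_neg_Iic
    (measurable_const.sub hf.measurable).aestronglyMeasurable ?_
  filter_upwards [ae_restrict_mem measurableSet_Iic] with y (hy : y ≤ 0)
  rw [norm_of_nonneg (sub_nonneg.2 (hf.mem_Icc y).2)]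
  have h_tail := hf.cavityExponent_neg_le hd hf_anti (σ := -y) (by linarith)
  rw [neg_neg] at h_tail
  exact (hf.one_sub_le_cavityExponent y).trans h_tail

theorem rpow_sub_le_cavityExponent (hd : 1 ≤ d) (hf : SolvesCavity d f) (hf_anti : Antitone f) :
    ∃ C, 0 ≤ C ∧ ∀ x, 0 ≤ x → x ^ d - C * x ^ (d - 1) ≤ cavityExponent d f x := by
  have h_int := hf.integrableOn_one_sub_Iic hd hf_anti
  have h_nonneg : ∀ y, 0 ≤ 1 - f y := fun y => sub_nonneg.2 (hf.mem_Icc y).2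
  refine ⟨d * ∫ y in Iic 0, (1 - f y),
    mul_nonneg (by linarith) (setIntegral_nonneg measurableSet_Iic fun y _ => h_nonneg y),
    fun x hx => ?_⟩
  have h_int' : IntegrableOn (fun y => x ^ (d - 1) * (1 - f y)) (Ioc (-x) 0) :=
    (h_int.mono_set Ioc_subset_Iic_self).const_mul _
  have h_tail : ∫ y in Ioc (-x) 0, (1 - f y) ≤ ∫ y in Iic 0, (1 - f y) :=
    setIntegral_mono_set h_int (Eventually.of_forall h_nonneg) Ioc_subset_Iic_self.eventuallyLE
  have h_kernel := integrableOn_Ioc_add_rpow (p := d - 1) (by linarith) x (-x) 0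
  calc x ^ d - (d * ∫ y in Iic 0, (1 - f y)) * x ^ (d - 1)
      ≤ x ^ d - d * (x ^ (d - 1) * ∫ y in Ioc (-x) 0, (1 - f y)) := by
        have := mul_le_mul_of_nonneg_left h_tail
          (mul_nonneg (by linarith : (0 : ℝ) ≤ d) (rpow_nonneg hx (d - 1)))
        linarith
    _ = d * ∫ y in Ioc (-x) 0, ((x + y) ^ (d - 1) - x ^ (d - 1) * (1 - f y)) := by
        rw [integral_sub h_kernel h_int', integral_const_mul, mul_sub,
          mul_integral_Ioc_add_rpow (by linarith) hx]
    _ ≤ d * ∫ y in Ioc (-x) 0, (x + y) ^ (d - 1) * f y := by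
        refine mul_le_mul_of_nonneg_left (setIntegral_mono_on (h_kernel.sub h_int')
          ((hf.integrableOn x).mono_set Ioc_subset_Ioi_self) measurableSet_Ioc fun y hy => ?_)
          (by linarith)
        have := mul_le_mul_of_nonneg_right
          (rpow_le_rpow (x := x + y) (y := x) (z := d - 1) (by linarith [hy.1])
            (by linarith [hy.2]) (by linarith)) (h_nonneg y)
        linarith
    _ ≤ cavityExponent d f x := hf.setIntegral_Ioc_le_cavityExponent (by linarith) x

theorem cavityExponent_le_rpow_add (hd : 1 ≤ d) (hf : SolvesCavity d f) :
    ∃ C, 0 ≤ C ∧ ∀ x, 0 ≤ x →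
      cavityExponent d f x ≤ x ^ d + C * (x + 1) ^ (d - 1) := by
  have h_int : IntegrableOn (fun y => (1 + y) ^ (d - 1) * f y) (Ioi 0) :=
    (hf.integrableOn 1).mono_set (Ioi_subset_Ioi (by norm_num))
  refine ⟨d * ∫ y in Ioi 0, (1 + y) ^ (d - 1) * f y, mul_nonneg (by linarith)
    (setIntegral_nonneg measurableSet_Ioi fun y (hy : 0 < y) =>
      mul_nonneg (rpow_nonneg (by linarith) _) (hf.mem_Icc y).1), fun x hx => ?_⟩
  have h_near_int :=
    (hf.integrableOn x).mono_set (Ioc_subset_Ioi_self : Ioc (-x) 0 ⊆ Ioi (-x))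
  have h_far_int := (hf.integrableOn x).mono_set (Ioi_subset_Ioi (neg_nonpos.2 hx))
  have h_split : cavityExponent d f x = (d * ∫ y in Ioc (-x) 0, (x + y) ^ (d - 1) * f y) +
      d * ∫ y in Ioi 0, (x + y) ^ (d - 1) * f y := by
    rw [cavityExponent, ← Ioc_union_Ioi_eq_Ioi (neg_nonpos.2 hx),
      setIntegral_union Ioc_disjoint_Ioi_same measurableSet_Ioi h_near_int h_far_int, mul_add]
  have h_near : ∫ y in Ioc (-x) 0, (x + y) ^ (d - 1) * f y ≤
      ∫ y in Ioc (-x) 0, (x + y) ^ (d - 1) :=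
    setIntegral_mono_on h_near_int (integrableOn_Ioc_add_rpow (by linarith) x (-x) 0)
      measurableSet_Ioc fun y hy =>
        mul_le_of_le_one_right (rpow_nonneg (by linarith [hy.1]) _) (hf.mem_Icc y).2
  have h_far : ∫ y in Ioi 0, (x + y) ^ (d - 1) * f y ≤
      (x + 1) ^ (d - 1) * ∫ y in Ioi 0, (1 + y) ^ (d - 1) * f y := by
    rw [← integral_const_mul]
    refine setIntegral_mono_on h_far_int (h_int.const_mul _) measurableSet_Ioi
      fun y (hy : 0 < y) => ?_
    rw [← mul_assoc, ← mul_rpow (by linarith) (by linarith)]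
    exact mul_le_mul_of_nonneg_right (rpow_le_rpow (by linarith) (by nlinarith) (by linarith))
      (hf.mem_Icc y).1
  have hd₀ : 0 ≤ d := by linarith
  calc cavityExponent d f x
      ≤ (d * ∫ y in Ioc (-x) 0, (x + y) ^ (d - 1)) +
          d * ((x + 1) ^ (d - 1) * ∫ y in Ioi 0, (1 + y) ^ (d - 1) * f y) := by
        rw [h_split]
        exact add_le_add (mul_le_mul_of_nonneg_left h_near hd₀)
          (mul_le_mul_of_nonneg_left h_far hd₀)
    _ = x ^ d + (d * ∫ y in Ioi 0, (1 + y) ^ (d - 1) * f y) * (x + 1) ^ (d - 1) := by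
        rw [mul_integral_Ioc_add_rpow (by linarith) hx]; ring

theorem eventually_comp_add_le (hd : 1 ≤ d) (hf : SolvesCavity d f) (hg : SolvesCavity d g)
    (hf_anti : Antitone f) : ∀ᶠ t in atTop, ∀ x, 0 ≤ x → f (x + t) ≤ g x := by
  obtain ⟨C₁, hC₁, hg_le⟩ := hg.cavityExponent_le_rpow_add hd
  obtain ⟨C₂, hC₂, hf_ge⟩ := hf.rpow_sub_le_cavityExponent hd hf_anti
  filter_upwards [eventually_ge_atTop 1, (tendsto_id.const_mul_atTop
    (by linarith : (0 : ℝ) < d)).eventually_ge_atTop (2 ^ d * (C₁ + C₂))] with t ht hCt x hx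
  rw [hf.eq_exp, hg.eq_exp]
  refine exp_le_exp.2 (neg_le_neg ?_)
  linarith [rpow_add_lower_order_le_add_rpow hd hx ht hC₁ hC₂ hCt, hg_le x hx,
    hf_ge (x + t) (by linarith)]

end SolvesCavity

/-- any two non-increasing solutions are sandwiched by shifts of
one another. -/
theorem cavity_solutions_shift_sandwich (d : ℝ) (hd : 1 < d)
    (f g : ℝ → ℝ) (hf_anti : Antitone f) (hg_anti : Antitone g)
    (hf : SolvesCavity d f) (hg : SolvesCavity d g) :
    ∃ t : ℝ, 0 ≤ t ∧ ∀ x : ℝ, f (x + t) ≤ g x ∧ g x ≤ f (x - t) := by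
  obtain ⟨t, hfg, hgf, ht⟩ := ((hf.eventually_comp_add_le hd.le hg hf_anti).and
    ((hg.eventually_comp_add_le hd.le hf hg_anti).and (eventually_ge_atTop 0))).exists
  have hd₀ : 0 ≤ d := by linarith
  have h_left : ∀ x ≤ -t, f (x + t) ≤ g x := fun x hx => by
    simpa only [add_sub_cancel_right] using
      hg.le_comp_sub_of_comp_add_le hd₀ hf (x := x + t) fun y hy => hgf y (by linarith)
  have h_shift : ∀ x, f (x + 2 * t) ≤ g x := by
    intro x
    rcases le_total 0 x with hx | hx
    · exact (hf_anti (by linarith)).trans (hfg x hx)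
    rcases le_total x (-t) with hx' | hx'
    · exact (hf_anti (by linarith)).trans (h_left x hx')
    calc f (x + 2 * t) ≤ f (0 + t) := hf_anti (by linarith)
      _ ≤ g 0 := hfg 0 le_rfl
      _ ≤ g x := hg_anti hx
  exact ⟨2 * t, by linarith, fun x =>
    ⟨h_shift x, hf.le_comp_sub_of_comp_add_le hd₀ hg fun y _ => h_shift y⟩⟩
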